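/- arXiv:1406.1072 — 2 statements merged into one kernel-verified Lean document; each statement's English description precedes it below -/
import Mathlib

section
/- Let B be an n×n skew-symmetrizable integer matrix, k an index, and ε ∈ {1,-1}. Then the mutated matrix μ_k(B) equals (J_{n,k} + E_k) · B · (J_{n,k} + F_k), where J_{n,k} is the diagonal matrix with all diagonal entries 1 except -1 in position k, E_k has only nonzero entries e_{ik} = [-ε B_{ik}]_+ (for i ≠ k) in column k, and F_k has only nonzero entries f_{kj} = [ε B_{kj}]_+ (for j ≠ k) in row k. -/
open Matrix BigOperators

/-- Matrix mutation at index `k`, with `[b]₊ = max b 0`. -/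
def mutate {n : ℕ} (k : Fin n) (B : Matrix (Fin n) (Fin n) ℤ) : Matrix (Fin n) (Fin n) ℤ :=
  Matrix.of fun i j =>
    if i = k ∨ j = k then -B i j
    else B i j + max (B i k) 0 * max (B k j) 0 - max (-B i k) 0 * max (-B k j) 0

/-- `B` is skew-symmetrizable: there is a diagonal matrix with positive diagonal
entries `d` such that `diagonal d * B` is skew-symmetric. -/
def SkewSymmetrizable {n : ℕ} (B : Matrix (Fin n) (Fin n) ℤ) : Prop :=
  ∃ d : Fin n → ℤ, (∀ i, 0 < d i) ∧ ∀ i j, d i * B i j = -(d j * B j i)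

/-- The diagonal matrix with all diagonal entries `1` except `-1` at position `k`. -/
def Jmat {n : ℕ} (k : Fin n) : Matrix (Fin n) (Fin n) ℤ :=
  Matrix.diagonal fun i => if i = k then -1 else 1

/-- The matrix whose only nonzero entries are `e_{ik} = [-ε B_{ik}]₊` for `i ≠ k`. -/
def Emat {n : ℕ} (ε : ℤ) (k : Fin n) (B : Matrix (Fin n) (Fin n) ℤ) :
    Matrix (Fin n) (Fin n) ℤ :=
  Matrix.of fun i j => if j = k ∧ i ≠ k then max (-(ε * B i k)) 0 else 0

/-- The matrix whose only nonzero entries are `f_{kj} = [ε B_{kj}]₊` for `j ≠ k`. -/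
def Fmat {n : ℕ} (ε : ℤ) (k : Fin n) (B : Matrix (Fin n) (Fin n) ℤ) :
    Matrix (Fin n) (Fin n) ℤ :=
  Matrix.of fun i j => if i = k ∧ j ≠ k then max (ε * B k j) 0 else 0

/-- Matrix mutation in matrix form: `μ_k(B) = (J_{n,k} + E_k) * B * (J_{n,k} + F_k)`. -/
theorem mutate_eq_matrix_form {n : ℕ} (B : Matrix (Fin n) (Fin n) ℤ)
    (hB : SkewSymmetrizable B) (k : Fin n) (ε : ℤ) (hε : ε = 1 ∨ ε = -1) :
    mutate k B = (Jmat k + Emat ε k B) * B * (Jmat k + Fmat ε k B) := by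
  obtain ⟨d, hd, hskew⟩ := hB
  have hkk : B k k = 0 := by
    have h := hskew k k
    have := hd k
    nlinarith
  have hJ : ∀ (C : Matrix (Fin n) (Fin n) ℤ) i j,
      (Jmat k * C) i j = (if i = k then -1 else 1) * C i j := by
    intro C i j; simp [Jmat, Matrix.diagonal_mul]
  have hJ' : ∀ (C : Matrix (Fin n) (Fin n) ℤ) i j,
      (C * Jmat k) i j = C i j * (if j = k then -1 else 1) := by
    intro C i j; simp [Jmat, Matrix.mul_diagonal]
  have hE : ∀ i j, (Emat ε k B * B) i j =
      (if i = k then 0 else max (-(ε * B i k)) 0 * B k j) := by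
    intro i j
    rw [Matrix.mul_apply, Finset.sum_eq_single k]
    · by_cases h : i = k <;> simp [Emat, h]
    · intro b _ hb; simp [Emat, hb]
    · simp
  have hF : ∀ (C : Matrix (Fin n) (Fin n) ℤ) i j, (C * Fmat ε k B) i j =
      (if j = k then 0 else C i k * max (ε * B k j) 0) := by
    intro C i j
    rw [Matrix.mul_apply, Finset.sum_eq_single k]
    · by_cases h : j = k <;> simp [Fmat, h]
    · intro b _ hb; simp [Fmat, hb]
    · simp
  ext i j
  simp only [Matrix.add_mul, Matrix.mul_add, Matrix.add_apply, hF, hE, hJ, hJ']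
  by_cases hi : i = k <;> by_cases hj : j = k <;>
    simp [mutate, hi, hj, hkk]
  · -- main case i ≠ k, j ≠ k
    rcases hε with hε | hε <;> subst hε <;>
      rcases le_total (B i k) 0 with ha | ha <;>
      rcases le_total (B k j) 0 with hb | hb <;>
      simp [max_eq_left, max_eq_right, neg_nonneg.mpr, neg_nonpos.mpr, ha, hb,
        max_eq_left_iff, max_eq_right_iff] <;>
      ring_nf
end

section
/- Let B be an n×n skew-symmetrizable integer matrix, k an index, ε ∈ {1,-1}, and u = (a_1,...,a_n) a radical vector for B (Bu = 0). Define u' = (a'_1,...,a'_n) by a'_i = a_i for i ≠ k and a'_k = -a_k + Σ_{i≠k} a_i [ε B_{ki}]_+. Then u' is a radical vector for the mutated matrix B' = μ_k(B), i.e. B'u' = 0. -/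
open Matrix BigOperators

lemma key1 (a b : ℤ) :
    max a 0 * max b 0 - max (-a) 0 * max (-b) 0 = max (-a) 0 * b + a * max b 0 := by
  rcases le_total a 0 with h | h <;> rcases le_total b 0 with h' | h'
  · rw [max_eq_right h, max_eq_left (neg_nonneg.2 h), max_eq_right h',
      max_eq_left (neg_nonneg.2 h')]; ring
  · rw [max_eq_right h, max_eq_left (neg_nonneg.2 h), max_eq_left h',
      max_eq_right (neg_nonpos.2 h')]; ring
  · rw [max_eq_left h, max_eq_right (neg_nonpos.2 h), max_eq_right h',
      max_eq_left (neg_nonneg.2 h')]; ring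
  · rw [max_eq_left h, max_eq_right (neg_nonpos.2 h), max_eq_left h',
      max_eq_right (neg_nonpos.2 h')]; ring

lemma key2 (a b : ℤ) :
    max a 0 * max b 0 - max (-a) 0 * max (-b) 0 = max a 0 * b + a * max (-b) 0 := by
  rcases le_total a 0 with h | h <;> rcases le_total b 0 with h' | h'
  · rw [max_eq_right h, max_eq_left (neg_nonneg.2 h), max_eq_right h',
      max_eq_left (neg_nonneg.2 h')]; ring
  · rw [max_eq_right h, max_eq_left (neg_nonneg.2 h), max_eq_left h',
      max_eq_right (neg_nonpos.2 h')]; ring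
  · rw [max_eq_left h, max_eq_right (neg_nonpos.2 h), max_eq_right h',
      max_eq_left (neg_nonneg.2 h')]; ring
  · rw [max_eq_left h, max_eq_right (neg_nonpos.2 h), max_eq_left h',
      max_eq_right (neg_nonpos.2 h')]; ring

/-- If `u` is a radical vector for `B`, then the vector `u'` obtained by the
coordinate mutation rule is a radical vector for `μ_k(B)`. -/
theorem mutate_radical {n : ℕ} (B : Matrix (Fin n) (Fin n) ℤ)
    (hB : SkewSymmetrizable B) (u : Fin n → ℤ) (hu : B.mulVec u = 0)
    (k : Fin n) (ε : ℤ) (hε : ε = 1 ∨ ε = -1) :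
    (mutate k B).mulVec
      (fun i => if i = k then -u k + ∑ j ∈ Finset.univ.erase k, u j * max (ε * B k j) 0
                else u i) = 0 := by
  obtain ⟨d, hd, hs⟩ := hB
  have hkk : B k k = 0 := by
    have h := hs k k
    have h2 : d k * B k k = 0 := by linarith
    exact (mul_eq_zero.mp h2).resolve_left (hd k).ne'
  have husum : ∀ i, ∑ j, B i j * u j = 0 := fun i => congrFun hu i
  have herase : ∀ i, ∑ j ∈ Finset.univ.erase k, B i j * u j = -(B i k * u k) := by
    intro i
    have h := husum i
    rw [← Finset.sum_erase_add _ _ (Finset.mem_univ k)] at h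
    linarith
  have hBk : ∑ j ∈ Finset.univ.erase k, B k j * u j = 0 := by
    rw [herase k, hkk]; ring
  funext i
  simp only [mulVec, dotProduct, Pi.zero_apply]
  rw [← Finset.sum_erase_add _ _ (Finset.mem_univ k)]
  by_cases hi : i = k
  · subst hi
    have h1 : ∑ j ∈ Finset.univ.erase i,
        mutate i B i j * (if j = i then
          -u i + ∑ j ∈ Finset.univ.erase i, u j * max (ε * B i j) 0 else u j)
        = ∑ j ∈ Finset.univ.erase i, -(B i j * u j) :=
      Finset.sum_congr rfl fun j hj => by
        have hj' : j ≠ i := Finset.ne_of_mem_erase hj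
        simp [mutate, hj']
    rw [h1, Finset.sum_neg_distrib, hBk]
    simp [mutate, hkk]
  · have h1 : ∑ j ∈ Finset.univ.erase k,
        mutate k B i j * (if j = k then
          -u k + ∑ j ∈ Finset.univ.erase k, u j * max (ε * B k j) 0 else u j)
        = ∑ j ∈ Finset.univ.erase k,
            (B i j + max (B i k) 0 * max (B k j) 0 - max (-B i k) 0 * max (-B k j) 0) * u j :=
      Finset.sum_congr rfl fun j hj => by
        have hj' : j ≠ k := Finset.ne_of_mem_erase hj
        simp [mutate, hj', hi]
    rw [h1]
    have hk2 : mutate k B i k = -B i k := by simp [mutate]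
    rw [hk2]
    simp only [if_pos rfl]
    rcases hε with rfl | rfl
    · simp only [one_mul]
      have h2 : ∑ j ∈ Finset.univ.erase k,
          (B i j + max (B i k) 0 * max (B k j) 0 - max (-B i k) 0 * max (-B k j) 0) * u j
          = ∑ j ∈ Finset.univ.erase k,
              (B i j * u j + max (-B i k) 0 * (B k j * u j) + B i k * (u j * max (B k j) 0)) :=
        Finset.sum_congr rfl fun j _ => by
          linear_combination u j * key1 (B i k) (B k j)
      rw [h2, Finset.sum_add_distrib, Finset.sum_add_distrib, ← Finset.mul_sum,
        ← Finset.mul_sum, herase i, hBk, mul_zero]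
      simp only [if_true]
      ring
    · simp only [neg_one_mul]
      have h2 : ∑ j ∈ Finset.univ.erase k,
          (B i j + max (B i k) 0 * max (B k j) 0 - max (-B i k) 0 * max (-B k j) 0) * u j
          = ∑ j ∈ Finset.univ.erase k,
              (B i j * u j + max (B i k) 0 * (B k j * u j) + B i k * (u j * max (-B k j) 0)) :=
        Finset.sum_congr rfl fun j _ => by
          linear_combination u j * key2 (B i k) (B k j)
      rw [h2, Finset.sum_add_distrib, Finset.sum_add_distrib, ← Finset.mul_sum,
        ← Finset.mul_sum, herase i, hBk, mul_zero]
      simp only [if_true]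
      ring
end
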